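/- Let L be an orthomodular ortholattice. Then L satisfies, for all a, b, c ∈ L, the identity (a →₁ b) ⊓ (b →₁ c) ⊓ (c →₁ a) = (a →₂ b) ⊓ (b →₂ c) ⊓ (c →₂ a) if and only if L satisfies Godowski's equation 3-Go: for all a, b, c ∈ L, (a →₁ b) ⊓ (b →₁ c) ⊓ (c →₁ a) = (c →₁ b) ⊓ (b →₁ a) ⊓ (a →₁ c). -/

import Mathlib

/-- An ortholattice: a bounded lattice with an orthocomplementation. -/
class Ortholattice (α : Type*) extends Lattice α, BoundedOrder α, Compl α where
  compl_compl : ∀ x : α, xᶜᶜ = x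
  compl_antitone : ∀ x y : α, x ≤ y → yᶜ ≤ xᶜ
  inf_compl : ∀ x : α, x ⊓ xᶜ = ⊥
  sup_compl : ∀ x : α, x ⊔ xᶜ = ⊤

/-- The Sasaki implication `a →₁ b = aᶜ ⊔ (a ⊓ b)`. -/
def olImp1 {α : Type*} [Ortholattice α] (a b : α) : α := aᶜ ⊔ (a ⊓ b)

/-- The Dishkant implication `a →₂ b = b ⊔ (aᶜ ⊓ bᶜ)`. -/
def olImp2 {α : Type*} [Ortholattice α] (a b : α) : α := b ⊔ (aᶜ ⊓ bᶜ)

/-!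
Both equations are equivalent to `(a →₁ b) ⊓ (b →₁ c) ⊓ (c →₁ a) = (a ⊓ b ⊓ c) ⊔ (aᶜ ⊓ bᶜ ⊓ cᶜ)`,
whose right-hand side is always below the left. In an orthomodular lattice every element lies
below the join of its Sasaki projections onto `X` and `Xᶜ`, so
`(x₁ ⊔ y₁) ⊓ (x₂ ⊔ y₂) ≤ (x₁ ⊓ x₂) ⊔ (y₁ ⊓ y₂)` whenever `xᵢ ≤ X` and `yᵢ ≤ Xᶜ`. Either equation
makes the `→₁`-cycle equal to its meet with the other side, and that meet lies below two such
joins: `(b ⊓ c) ⊔ (aᶜ ⊓ bᶜ)` and `(c ⊓ a) ⊔ (bᶜ ⊓ cᶜ)` with `X = (a ⊔ b) ⊓ c` for the first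
equation and, as `(x →₁ y) ⊓ (y →₁ x) ≤ (x ⊓ y) ⊔ (xᶜ ⊓ yᶜ)`, `(a ⊓ b) ⊔ (aᶜ ⊓ bᶜ)` and
`(b ⊓ c) ⊔ (bᶜ ⊓ cᶜ)` with `X = b` for 3-Go. Conversely, `(a ⊓ b ⊓ c) ⊔ (aᶜ ⊓ bᶜ ⊓ cᶜ)` is
invariant under reversing `a, b, c`, which mirrors the `→₁`-cycle, and under complementing them,
which turns it into the `→₂`-cycle since `a →₂ b = bᶜ →₁ aᶜ`.
-/

class IsOrthomodularLattice (α : Type*) [Ortholattice α] : Prop where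
  sup_compl_inf_of_le : ∀ {a b : α}, a ≤ b → a ⊔ (aᶜ ⊓ b) = b

namespace Ortholattice

variable {α : Type*} [Ortholattice α]

def olImp1Cycle (a b c : α) : α := olImp1 a b ⊓ olImp1 b c ⊓ olImp1 c a

def olImp2Cycle (a b c : α) : α := olImp2 a b ⊓ olImp2 b c ⊓ olImp2 c a

def olEquiv3 (a b c : α) : α := a ⊓ b ⊓ c ⊔ aᶜ ⊓ bᶜ ⊓ cᶜ

theorem compl_le_compl {x y : α} (h : x ≤ y) : yᶜ ≤ xᶜ := compl_antitone x y h

theorem le_compl_comm {x y : α} : x ≤ yᶜ ↔ y ≤ xᶜ :=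
  ⟨fun h => by simpa only [compl_compl] using compl_le_compl h,
    fun h => by simpa only [compl_compl] using compl_le_compl h⟩

theorem compl_sup (x y : α) : (x ⊔ y)ᶜ = xᶜ ⊓ yᶜ :=
  le_antisymm (le_inf (compl_le_compl le_sup_left) (compl_le_compl le_sup_right))
    (le_compl_comm.1 (sup_le (le_compl_comm.1 inf_le_left) (le_compl_comm.1 inf_le_right)))

theorem compl_inf (x y : α) : (x ⊓ y)ᶜ = xᶜ ⊔ yᶜ := by
  rw [← compl_compl (xᶜ ⊔ yᶜ), compl_sup, compl_compl, compl_compl]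

theorem olImp2_eq_olImp1_compl (a b : α) : olImp2 a b = olImp1 bᶜ aᶜ := by
  rw [olImp1, olImp2, compl_compl, inf_comm]

theorem olImp2Cycle_eq_olImp1Cycle_compl (a b c : α) :
    olImp2Cycle a b c = olImp1Cycle aᶜ cᶜ bᶜ := by
  simp only [olImp2Cycle, olImp1Cycle, olImp2_eq_olImp1_compl]
  ac_rfl

theorem olEquiv3_compl (a b c : α) : olEquiv3 aᶜ cᶜ bᶜ = olEquiv3 a b c := by
  simp only [olEquiv3, compl_compl]
  ac_rfl

theorem olEquiv3_rev (a b c : α) : olEquiv3 c b a = olEquiv3 a b c := by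
  simp only [olEquiv3]
  ac_rfl

theorem olEquiv3_le_olImp1Cycle (a b c : α) : olEquiv3 a b c ≤ olImp1Cycle a b c := by
  simp [olEquiv3, olImp1Cycle, olImp1, le_sup_of_le_left, le_sup_of_le_right,
    inf_le_of_left_le]

theorem olImp1Cycle_eq_olEquiv3_of_inf_le {a b c x : α} (hx : olImp1Cycle a b c ≤ x)
    (h : olImp1Cycle a b c ⊓ x ≤ olEquiv3 a b c) : olImp1Cycle a b c = olEquiv3 a b c :=
  le_antisymm ((le_inf le_rfl hx).trans h) (olEquiv3_le_olImp1Cycle a b c)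

section Orthomodular

variable [IsOrthomodularLattice α]

theorem inf_compl_sup_of_le {p a : α} (h : p ≤ a) : a ⊓ (aᶜ ⊔ p) = p := by
  simpa only [compl_sup, compl_inf, compl_compl] using
    congrArg compl (IsOrthomodularLattice.sup_compl_inf_of_le (compl_le_compl h))

theorem sup_inf_eq_of_le_of_le_compl {p q a : α} (hp : p ≤ a) (hq : q ≤ aᶜ) :
    (p ⊔ q) ⊓ a = p :=
  le_antisymm
    (calc (p ⊔ q) ⊓ a ≤ a ⊓ (aᶜ ⊔ p) :=
          le_inf inf_le_right (inf_le_of_left_le (sup_le le_sup_right (hq.trans le_sup_left)))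
      _ = p := inf_compl_sup_of_le hp)
    (le_inf le_sup_left hp)

theorem sup_inf_compl_sup_eq {u v a : α} (hu : u ≤ a) (hv : v ≤ aᶜ) :
    (a ⊔ v) ⊓ (aᶜ ⊔ u) = u ⊔ v := by
  have hvw : v ≤ (a ⊔ v) ⊓ (aᶜ ⊔ u) := le_inf le_sup_right (hv.trans le_sup_left)
  have hcompl : vᶜ ⊓ ((a ⊔ v) ⊓ (aᶜ ⊔ u)) = u :=
    calc vᶜ ⊓ ((a ⊔ v) ⊓ (aᶜ ⊔ u)) = ((a ⊔ v) ⊓ vᶜ) ⊓ (aᶜ ⊔ u) := by ac_rfl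
      _ = a ⊓ (aᶜ ⊔ u) := by
        rw [sup_inf_eq_of_le_of_le_compl (le_compl_comm.1 hv) (compl_compl v).ge]
      _ = u := inf_compl_sup_of_le hu
  rw [← IsOrthomodularLattice.sup_compl_inf_of_le hvw, hcompl, sup_comm]

theorem le_sasaki_sup_sasaki_compl (a z : α) : z ≤ a ⊓ (aᶜ ⊔ z) ⊔ aᶜ ⊓ (a ⊔ z) := by
  have ha : a ⊔ aᶜ ⊓ (a ⊔ z) = a ⊔ z := IsOrthomodularLattice.sup_compl_inf_of_le le_sup_left
  have hac : aᶜ ⊔ a ⊓ (aᶜ ⊔ z) = aᶜ ⊔ z := by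
    simpa only [compl_compl] using
      IsOrthomodularLattice.sup_compl_inf_of_le (le_sup_left : aᶜ ≤ aᶜ ⊔ z)
  rw [← sup_inf_compl_sup_eq inf_le_left inf_le_left, ha, hac]
  exact le_inf le_sup_right le_sup_right

theorem inf_compl_sup_le_of_le_sup {a x y z : α} (hx : x ≤ a) (hy : y ≤ aᶜ) (h : z ≤ x ⊔ y) :
    a ⊓ (aᶜ ⊔ z) ≤ x :=
  calc a ⊓ (aᶜ ⊔ z) ≤ a ⊓ (aᶜ ⊔ x) :=
        inf_le_inf_left a
          (sup_le le_sup_left (h.trans (sup_le le_sup_right (hy.trans le_sup_left))))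
    _ = x := inf_compl_sup_of_le hx

theorem sup_inf_sup_le {a x₁ x₂ y₁ y₂ : α} (hx₁ : x₁ ≤ a) (hx₂ : x₂ ≤ a) (hy₁ : y₁ ≤ aᶜ)
    (hy₂ : y₂ ≤ aᶜ) : (x₁ ⊔ y₁) ⊓ (x₂ ⊔ y₂) ≤ x₁ ⊓ x₂ ⊔ y₁ ⊓ y₂ := by
  set z := (x₁ ⊔ y₁) ⊓ (x₂ ⊔ y₂)
  have hcompl {x y : α} (hx : x ≤ a) (hy : y ≤ aᶜ) (h : z ≤ x ⊔ y) : aᶜ ⊓ (a ⊔ z) ≤ y := by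
    simpa only [compl_compl] using
      inf_compl_sup_le_of_le_sup hy ((compl_compl a).symm ▸ hx) (sup_comm x y ▸ h)
  calc z ≤ a ⊓ (aᶜ ⊔ z) ⊔ aᶜ ⊓ (a ⊔ z) := le_sasaki_sup_sasaki_compl a z
    _ ≤ x₁ ⊓ x₂ ⊔ y₁ ⊓ y₂ :=
      sup_le_sup
        (le_inf (inf_compl_sup_le_of_le_sup hx₁ hy₁ inf_le_left)
          (inf_compl_sup_le_of_le_sup hx₂ hy₂ inf_le_right))
        (le_inf (hcompl hx₁ hy₁ inf_le_left) (hcompl hx₂ hy₂ inf_le_right))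

theorem compl_inf_inf_olImp1 (x y : α) : (x ⊓ y)ᶜ ⊓ olImp1 x y = xᶜ := by
  rw [inf_comm, olImp1]
  exact sup_inf_eq_of_le_of_le_compl (compl_le_compl inf_le_left) (compl_compl _).ge

theorem olImp1_inf_olImp1_le (x y : α) : olImp1 x y ⊓ olImp1 y x ≤ x ⊓ y ⊔ xᶜ ⊓ yᶜ := by
  set e := x ⊓ y ⊔ xᶜ ⊓ yᶜ
  have he : e ≤ olImp1 x y ⊓ olImp1 y x := by
    simp [e, olImp1, le_sup_of_le_left, inf_comm y x]
  have hx : eᶜ ⊓ (olImp1 x y ⊓ olImp1 y x) ≤ xᶜ :=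
    compl_inf_inf_olImp1 x y ▸
      inf_le_inf (compl_le_compl le_sup_left) inf_le_left
  have hy : eᶜ ⊓ (olImp1 x y ⊓ olImp1 y x) ≤ yᶜ :=
    compl_inf_inf_olImp1 y x ▸
      inf_le_inf (compl_le_compl ((inf_comm y x).le.trans le_sup_left)) inf_le_right
  calc olImp1 x y ⊓ olImp1 y x = e ⊔ eᶜ ⊓ (olImp1 x y ⊓ olImp1 y x) :=
        (IsOrthomodularLattice.sup_compl_inf_of_le he).symm
    _ ≤ e := sup_le le_rfl ((le_inf hx hy).trans le_sup_right)

theorem olImp2_inf_olImp1 (a b c : α) : olImp2 a b ⊓ olImp1 b c = b ⊓ c ⊔ aᶜ ⊓ bᶜ :=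
  sup_inf_compl_sup_eq inf_le_left inf_le_right

theorem olImp1Cycle_inf_olImp2Cycle_le (a b c : α) :
    olImp1Cycle a b c ⊓ olImp2Cycle a b c ≤ olEquiv3 a b c := by
  have hbc : olImp1Cycle a b c ⊓ olImp2Cycle a b c ≤ b ⊓ c ⊔ aᶜ ⊓ bᶜ := by
    rw [← olImp2_inf_olImp1]
    simp [olImp1Cycle, olImp2Cycle, inf_le_of_left_le, inf_le_of_right_le]
  have hca : olImp1Cycle a b c ⊓ olImp2Cycle a b c ≤ c ⊓ a ⊔ bᶜ ⊓ cᶜ := by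
    rw [← olImp2_inf_olImp1]
    simp [olImp1Cycle, olImp2Cycle, inf_le_of_left_le, inf_le_of_right_le]
  calc olImp1Cycle a b c ⊓ olImp2Cycle a b c ≤ (b ⊓ c ⊔ aᶜ ⊓ bᶜ) ⊓ (c ⊓ a ⊔ bᶜ ⊓ cᶜ) :=
        le_inf hbc hca
    _ ≤ b ⊓ c ⊓ (c ⊓ a) ⊔ aᶜ ⊓ bᶜ ⊓ (bᶜ ⊓ cᶜ) :=
      sup_inf_sup_le (a := (a ⊔ b) ⊓ c)
        (le_inf (inf_le_left.trans le_sup_right) inf_le_right)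
        (le_inf (inf_le_right.trans le_sup_left) inf_le_left)
        ((compl_sup a b).symm ▸ compl_le_compl inf_le_left)
        (inf_le_right.trans (compl_le_compl inf_le_right))
    _ ≤ olEquiv3 a b c := by
      simp [olEquiv3, le_sup_of_le_left, le_sup_of_le_right, inf_le_of_left_le, inf_le_of_right_le]

theorem olImp1Cycle_inf_olImp1Cycle_rev_le (a b c : α) :
    olImp1Cycle a b c ⊓ olImp1Cycle c b a ≤ olEquiv3 a b c := by
  have hab : olImp1Cycle a b c ⊓ olImp1Cycle c b a ≤ a ⊓ b ⊔ aᶜ ⊓ bᶜ :=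
    le_trans (by simp [olImp1Cycle, inf_le_of_left_le, inf_le_of_right_le])
      (olImp1_inf_olImp1_le a b)
  have hbc : olImp1Cycle a b c ⊓ olImp1Cycle c b a ≤ b ⊓ c ⊔ bᶜ ⊓ cᶜ :=
    le_trans (by simp [olImp1Cycle, inf_le_of_left_le, inf_le_of_right_le])
      (olImp1_inf_olImp1_le b c)
  calc olImp1Cycle a b c ⊓ olImp1Cycle c b a ≤ (a ⊓ b ⊔ aᶜ ⊓ bᶜ) ⊓ (b ⊓ c ⊔ bᶜ ⊓ cᶜ) :=
        le_inf hab hbc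
    _ ≤ a ⊓ b ⊓ (b ⊓ c) ⊔ aᶜ ⊓ bᶜ ⊓ (bᶜ ⊓ cᶜ) :=
      sup_inf_sup_le (a := b) inf_le_right inf_le_left inf_le_right inf_le_left
    _ ≤ olEquiv3 a b c := by
      simp [olEquiv3, le_sup_of_le_left, le_sup_of_le_right, inf_le_of_left_le, inf_le_of_right_le]

theorem olImp1Cycle_eq_olImp2Cycle_iff :
    (∀ a b c : α, olImp1Cycle a b c = olImp2Cycle a b c) ↔
      ∀ a b c : α, olImp1Cycle a b c = olEquiv3 a b c := by
  refine ⟨fun h a b c => ?_, fun h a b c => ?_⟩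
  · exact olImp1Cycle_eq_olEquiv3_of_inf_le (h a b c).le (olImp1Cycle_inf_olImp2Cycle_le a b c)
  · rw [olImp2Cycle_eq_olImp1Cycle_compl, h, h, olEquiv3_compl]

theorem olImp1Cycle_eq_olImp1Cycle_rev_iff :
    (∀ a b c : α, olImp1Cycle a b c = olImp1Cycle c b a) ↔
      ∀ a b c : α, olImp1Cycle a b c = olEquiv3 a b c := by
  refine ⟨fun h a b c => ?_, fun h a b c => ?_⟩
  · exact olImp1Cycle_eq_olEquiv3_of_inf_le (h a b c).le
      (olImp1Cycle_inf_olImp1Cycle_rev_le a b c)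
  · rw [h, h, olEquiv3_rev]

end Orthomodular

end Ortholattice

/-- An orthomodular ortholattice satisfies
`(a →₁ b) ⊓ (b →₁ c) ⊓ (c →₁ a) = (a →₂ b) ⊓ (b →₂ c) ⊓ (c →₂ a)` iff it satisfies
Godowski'\''s equation 3-Go. -/
theorem stmt_10 (α : Type*) [Ortholattice α]
    (hOM : ∀ a b : α, a ≤ b → a ⊔ (aᶜ ⊓ b) = b) :
    (∀ a b c : α,
        olImp1 a b ⊓ olImp1 b c ⊓ olImp1 c a = olImp2 a b ⊓ olImp2 b c ⊓ olImp2 c a) ↔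
      (∀ a b c : α,
        olImp1 a b ⊓ olImp1 b c ⊓ olImp1 c a = olImp1 c b ⊓ olImp1 b a ⊓ olImp1 a c) := by
  have : IsOrthomodularLattice α := ⟨hOM _ _⟩
  exact Ortholattice.olImp1Cycle_eq_olImp2Cycle_iff.trans
    Ortholattice.olImp1Cycle_eq_olImp1Cycle_rev_iff.symm
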